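/- arXiv:0709.1596 — 2 statements merged into one kernel-verified Lean document; each statement's English description precedes it below -/
import Mathlib

section
/- Let d > 0, T_r > 0, k a positive integer, T_h = k·T_r, α_x ∈ (0,1), α_y ∈ (0,1], μ ≥ 0, and let a > 0, b > 0 (playing the roles of f'(0) and g'(0)). Let y_ph be defined from y* = μ T_r·( ((1-e^{-d T_h})/(1-e^{-d T_r}))·(1-α_y) + α_y ) / (1-(1-α_y)·e^{-d T_h}) by y_ph(t) = y*·e^{-d·(t mod T_h)} + μ T_r·e^{-d·(t mod T_r)}·Σ_{j=0}^{⌊(t mod T_h)/T_r⌋ - 1} e^{-j d T_r}. Then (1-α_x)·exp( a·T_h - b·∫_0^{T_h} y_ph(t) dt ) < 1 if and only if μ > d·( a/b + ln(1-α_x)/(b·T_h) ) / ( 1 - ( α_y·(1-e^{-d T_h}) / (1-(1-α_y)·e^{-d T_h}) )·( e^{-d T_h/k} / (k·(1-e^{-d T_h/k})) ) ). -/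
/-- The representative of `t` modulo `P` lying in `[0, P)` (for `P > 0`). -/
noncomputable def rmod (P t : ℝ) : ℝ := t - P * (⌊t / P⌋ : ℝ)

/-! On the `i`-th release period of the first harvest period, `y_ph` is the exponential decay
`exp (-d (t - i Tr))` scaled by `y* qⁱ + μ Tr (1 + q + ⋯ + qⁱ⁻¹)`, where `q = exp (-d Tr)`.
Integrating piece by piece, the sums telescope and the choice of `y*` leaves
`∫₀^Th y_ph = μ Th (1 - S) / d` with `0 < 1 - S`. Taking logarithms, the stability condition
becomes `log (1 - αx) + a Th < b μ Th (1 - S) / d`, which is linear in `μ`. -/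

open Real Set Finset MeasureTheory

theorem floor_div_eq_of_mem_Ico {P t : ℝ} (hP : 0 < P) {n : ℤ}
    (ht : t ∈ Ico (n * P) ((n + 1) * P)) : ⌊t / P⌋ = n := by
  rw [Int.floor_eq_iff, le_div_iff₀ hP, div_lt_iff₀ hP]
  exact ht

theorem rmod_eq_of_mem_Ico {P t : ℝ} (hP : 0 < P) {n : ℤ}
    (ht : t ∈ Ico (n * P) ((n + 1) * P)) : rmod P t = t - n * P := by
  rw [rmod, floor_div_eq_of_mem_Ico hP ht]
  ring

theorem rmod_eq_self_of_mem_Ico {P t : ℝ} (hP : 0 < P) (ht : t ∈ Ico 0 P) : rmod P t = t := by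
  simpa using rmod_eq_of_mem_Ico hP (n := 0) (by simpa using ht)

theorem integral_exp_neg_mul_sub {d : ℝ} (hd : d ≠ 0) (c T : ℝ) :
    ∫ t in c..c + T, exp (-d * (t - c)) = (1 - exp (-d * T)) / d := by
  rw [intervalIntegral.integral_comp_sub_right (fun u => exp (-d * u)),
    intervalIntegral.integral_comp_mul_left (fun u => exp u) (neg_ne_zero.mpr hd), integral_exp]
  simp only [add_sub_cancel_left, sub_self, mul_zero, exp_zero, smul_eq_mul]
  field_simp
  ring

/-- The pest-free solution `y_ph` started at `y₀`; it is periodic when `y₀ = y*`. -/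
noncomputable def pestFreeSolution (d Tr Th μ y₀ t : ℝ) : ℝ :=
  y₀ * exp (-d * rmod Th t) + μ * Tr * exp (-d * rmod Tr t)
    * ∑ j ∈ range ⌊rmod Th t / Tr⌋.toNat, exp (-(j : ℝ) * d * Tr)

section pestFreeSolution

variable {d Tr μ y₀ : ℝ} {i k : ℕ}

theorem pestFreeSolution_eq_of_mem_Ioo (hTr : 0 < Tr) (hik : i < k) {t : ℝ}
    (ht : t ∈ Ioo (i * Tr) ((i + 1 : ℕ) * Tr)) :
    pestFreeSolution d Tr (k * Tr) μ y₀ t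
      = (y₀ * exp (-d * Tr) ^ i + μ * Tr * ∑ j ∈ range i, exp (-d * Tr) ^ j)
        * exp (-d * (t - i * Tr)) := by
  push_cast at ht
  have hk : (i : ℝ) + 1 ≤ k := by exact_mod_cast hik
  have hTh : t ∈ Ico 0 (k * Tr) := ⟨by nlinarith [ht.1], by nlinarith [ht.2]⟩
  have hTr' : t ∈ Ico ((i : ℤ) * Tr) (((i : ℤ) + 1) * Tr) := by
    push_cast
    exact Ioo_subset_Ico_self ht
  have hkTr : 0 < k * Tr := by nlinarith
  have hexp : exp (-d * t) = exp (-d * Tr) ^ i * exp (-d * (t - i * Tr)) := by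
    rw [← exp_nat_mul, ← exp_add]; ring_nf
  have hsum : ∀ j : ℕ, exp (-(j : ℝ) * d * Tr) = exp (-d * Tr) ^ j := fun j => by
    rw [← exp_nat_mul]; ring_nf
  rw [pestFreeSolution, rmod_eq_self_of_mem_Ico hkTr hTh, rmod_eq_of_mem_Ico hTr hTr',
    floor_div_eq_of_mem_Ico hTr hTr', Int.toNat_natCast, Int.cast_natCast, hexp]
  simp only [hsum]
  ring

theorem intervalIntegrable_pestFreeSolution (hTr : 0 < Tr) (hik : i < k) :
    IntervalIntegrable (pestFreeSolution d Tr (k * Tr) μ y₀) volume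
      (i * Tr) ((i + 1 : ℕ) * Tr) := by
  have hle : (i : ℝ) * Tr ≤ (i + 1 : ℕ) * Tr := by gcongr; simp
  refine (intervalIntegrable_congr_uIoo fun t ht =>
    pestFreeSolution_eq_of_mem_Ioo hTr hik (uIoo_of_le hle ▸ ht)).mpr ?_
  exact Continuous.intervalIntegrable (by fun_prop) _ _

theorem integral_pestFreeSolution_piece (hd : d ≠ 0) (hTr : 0 < Tr) (hik : i < k) :
    ∫ t in i * Tr..(i + 1 : ℕ) * Tr, pestFreeSolution d Tr (k * Tr) μ y₀ t
      = (y₀ * (exp (-d * Tr) ^ i - exp (-d * Tr) ^ (i + 1))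
          + μ * Tr * (1 - exp (-d * Tr) ^ i)) / d := by
  have hle : (i : ℝ) * Tr ≤ (i + 1 : ℕ) * Tr := by gcongr; simp
  have hend : ((i + 1 : ℕ) : ℝ) * Tr = i * Tr + Tr := by push_cast; ring
  rw [intervalIntegral.integral_congr_Ioo_of_le hle fun t ht =>
      pestFreeSolution_eq_of_mem_Ioo hTr hik ht,
    intervalIntegral.integral_const_mul, hend, integral_exp_neg_mul_sub hd, pow_succ,
    ← mul_neg_geom_sum (exp (-d * Tr)) i]
  ring

theorem integral_pestFreeSolution (hd : d ≠ 0) (hTr : 0 < Tr) (k : ℕ) :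
    ∫ t in 0..k * Tr, pestFreeSolution d Tr (k * Tr) μ y₀ t
      = (y₀ * (1 - exp (-d * Tr) ^ k)
          + μ * Tr * (k - ∑ i ∈ range k, exp (-d * Tr) ^ i)) / d := by
  have hpieces := intervalIntegral.sum_integral_adjacent_intervals (a := fun i : ℕ => i * Tr)
    (μ := volume) (f := pestFreeSolution d Tr (k * Tr) μ y₀)
    fun i hik => intervalIntegrable_pestFreeSolution hTr hik
  simp only [Nat.cast_zero, zero_mul] at hpieces
  rw [← hpieces, Finset.sum_congr rfl fun i hi =>
    integral_pestFreeSolution_piece hd hTr (Finset.mem_range.mp hi), ← Finset.sum_div,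
    Finset.sum_add_distrib, ← Finset.mul_sum, ← Finset.mul_sum, Finset.sum_range_sub',
    Finset.sum_sub_distrib]
  simp

end pestFreeSolution

/-- With `q = exp (-d Tr)`, the `S` of the threshold `μ_h = d (a/b + log (1-αx)/(b Th)) / (1 - S)`:
harvesting makes `∫ y_ph` over a harvest period equal to `μ Th (1 - S) / d`. -/
noncomputable def harvestLoss (αy q : ℝ) (k : ℕ) : ℝ :=
  αy * (1 - q ^ k) / (1 - (1 - αy) * q ^ k) * (q / (k * (1 - q)))

theorem harvestLoss_lt_one {αy q : ℝ} {k : ℕ} (hq0 : 0 < q) (hq1 : q < 1) (hα0 : 0 ≤ αy)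
    (hα1 : αy ≤ 1) (hk : k ≠ 0) : harvestLoss αy q k < 1 := by
  have hqk : q ^ k ≤ q := pow_le_of_le_one hq0.le hq1.le hk
  have hD : αy * q < 1 - (1 - αy) * q ^ k := by nlinarith
  have hD0 : 0 < 1 - (1 - αy) * q ^ k := lt_of_le_of_lt (by positivity) hD
  have hG : ∑ i ∈ range k, q ^ i ≤ k := by
    simpa using Finset.sum_le_sum fun i (_ : i ∈ range k) => pow_le_one₀ hq0.le hq1.le
  have hG0 : 0 < ∑ i ∈ range k, q ^ i := geom_sum_pos hq0.le hk
  have hk0 : (0 : ℝ) < k := by positivity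
  have hq1' : 0 < 1 - q := sub_pos.mpr hq1
  rw [harvestLoss, div_mul_div_comm, div_lt_one (by positivity), ← mul_neg_geom_sum]
  calc αy * ((1 - q) * ∑ i ∈ range k, q ^ i) * q
      = (1 - q) * (αy * q) * ∑ i ∈ range k, q ^ i := by ring
    _ < (1 - q) * (1 - (1 - αy) * q ^ k) * ∑ i ∈ range k, q ^ i := by gcongr
    _ ≤ (1 - q) * (1 - (1 - αy) * q ^ k) * k := by gcongr
    _ = (1 - (1 - αy) * q ^ k) * (k * (1 - q)) := by ring

theorem pestFreeMass_eq_mul_one_sub_harvestLoss {αy q μ Tr y₀ : ℝ} {k : ℕ} (hq : q ≠ 1)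
    (hD : 1 - (1 - αy) * q ^ k ≠ 0) (hk : k ≠ 0)
    (hy₀ : y₀ = μ * Tr * ((1 - q ^ k) / (1 - q) * (1 - αy) + αy) / (1 - (1 - αy) * q ^ k)) :
    y₀ * (1 - q ^ k) + μ * Tr * (k - ∑ i ∈ range k, q ^ i)
      = μ * (k * Tr) * (1 - harvestLoss αy q k) := by
  have hq' : 1 - q ≠ 0 := sub_ne_zero.mpr hq.symm
  rw [hy₀, harvestLoss, geom_sum_eq hq]
  generalize hDdef : 1 - (1 - αy) * q ^ k = D at hD ⊢
  field_simp
  linear_combination (-(μ * Tr * (1 - q) * (1 - q ^ k))) * hDdef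

theorem mul_exp_lt_one_iff {c x : ℝ} (hc : 0 < c) : c * exp x < 1 ↔ log c + x < 0 := by
  rw [← exp_lt_one_iff, exp_add, exp_log hc]

theorem stmt_12_general (d Tr Th αx αy μ a b : ℝ) (k : ℕ) (hk : 0 < k) (hd : 0 < d) (hTr : 0 < Tr)
    (hTh : Th = (k : ℝ) * Tr) (hαx : αx ∈ Set.Ioo (0 : ℝ) 1) (hαy : αy ∈ Set.Ioc (0 : ℝ) 1)
    (hb : 0 < b)
    (ystar : ℝ)
    (hystar : ystar = μ * Tr * ((1 - Real.exp (-d * Th)) / (1 - Real.exp (-d * Tr)) * (1 - αy)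
      + αy) / (1 - (1 - αy) * Real.exp (-d * Th)))
    (yph : ℝ → ℝ)
    (hyph : ∀ t : ℝ, yph t = ystar * Real.exp (-d * rmod Th t)
      + μ * Tr * Real.exp (-d * rmod Tr t)
        * ∑ j ∈ Finset.range (⌊rmod Th t / Tr⌋.toNat), Real.exp (-(j : ℝ) * d * Tr)) :
    (1 - αx) * Real.exp (a * Th - b * ∫ t in (0 : ℝ)..Th, yph t) < 1 ↔
      μ > d * (a / b + Real.log (1 - αx) / (b * Th))
        / (1 - αy * (1 - Real.exp (-d * Th)) / (1 - (1 - αy) * Real.exp (-d * Th))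
          * (Real.exp (-d * Th / k) / ((k : ℝ) * (1 - Real.exp (-d * Th / k))))) := by
  subst hTh
  set q := exp (-d * Tr)
  have hq1 : q < 1 := exp_lt_one_iff.mpr (by nlinarith)
  have hqk : exp (-d * (k * Tr)) = q ^ k := by rw [← exp_nat_mul]; ring_nf
  have hq : exp (-d * (k * Tr) / k) = q := by congr 1; field_simp
  have hloss : harvestLoss αy q k < 1 :=
    harvestLoss_lt_one (exp_pos _) hq1 hαy.1.le hαy.2 hk.ne'
  have hD : 1 - (1 - αy) * q ^ k ≠ 0 := by
    have := pow_lt_one₀ (exp_pos _).le hq1 hk.ne'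
    nlinarith [hαy.1, hαy.2]
  rw [hqk] at hystar
  rw [hqk, hq, ← harvestLoss, show yph = pestFreeSolution d Tr (k * Tr) μ ystar from funext hyph,
    integral_pestFreeSolution hd.ne' hTr,
    pestFreeMass_eq_mul_one_sub_harvestLoss hq1.ne hD hk.ne' hystar, mul_exp_lt_one_iff (sub_pos.mpr hαx.2),
    gt_iff_lt, div_lt_iff₀ (sub_pos.mpr hloss)]
  have hscale : d * (a / b + log (1 - αx) / (b * (k * Tr)))
      = (log (1 - αx) + a * (k * Tr)) / (b * (k * Tr) / d) := by
    field_simp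
    ring
  have hmass : b * (μ * (k * Tr) * (1 - harvestLoss αy q k) / d)
      = μ * (1 - harvestLoss αy q k) * (b * (k * Tr) / d) := by
    ring
  rw [hscale, div_lt_iff₀ (by positivity), hmass, ← add_sub_assoc, sub_neg]

/-- The local stability condition `|B₁₁| < 1` over one harvest period
(`T_h = k·T_r`, releases more frequent than harvests) is equivalent to
`μ > μ_h(a/b, b)` where `a = f'(0)` and `b = g'(0)`. -/
theorem stmt_12 (d Tr Th αx αy μ a b : ℝ) (k : ℕ) (hk : 0 < k) (hd : 0 < d) (hTr : 0 < Tr)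
    (hTh : Th = (k : ℝ) * Tr) (hαx : αx ∈ Set.Ioo (0 : ℝ) 1) (hαy : αy ∈ Set.Ioc (0 : ℝ) 1)
    (hμ : 0 ≤ μ) (ha : 0 < a) (hb : 0 < b)
    (ystar : ℝ)
    (hystar : ystar = μ * Tr * ((1 - Real.exp (-d * Th)) / (1 - Real.exp (-d * Tr)) * (1 - αy)
      + αy) / (1 - (1 - αy) * Real.exp (-d * Th)))
    (yph : ℝ → ℝ)
    (hyph : ∀ t : ℝ, yph t = ystar * Real.exp (-d * rmod Th t)
      + μ * Tr * Real.exp (-d * rmod Tr t)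
        * ∑ j ∈ Finset.range (⌊rmod Th t / Tr⌋.toNat), Real.exp (-(j : ℝ) * d * Tr)) :
    (1 - αx) * Real.exp (a * Th - b * ∫ t in (0 : ℝ)..Th, yph t) < 1 ↔
      μ > d * (a / b + Real.log (1 - αx) / (b * Th))
        / (1 - αy * (1 - Real.exp (-d * Th)) / (1 - (1 - αy) * Real.exp (-d * Th))
          * (Real.exp (-d * Th / k) / ((k : ℝ) * (1 - Real.exp (-d * Th / k))))) :=
  stmt_12_general d Tr Th αx αy μ a b k hk hd hTr hTh hαx hαy hb ystar hystar yph hyph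
end

section
/- Let d > 0, T_h > 0, k a positive integer, T_r = k·T_h, α_x ∈ (0,1), α_y ∈ [0,1], μ ≥ 0, and let a > 0, b > 0 (playing the roles of f'(0) and g'(0)). Let y_pr be defined from y* = μ T_r / (1-(1-α_y)^k·e^{-d T_r}) by y_pr(t) = y*·e^{-d·(t mod T_r)}·(1-α_y)^{⌊(t mod T_r)/T_h⌋}. Then (1-α_x)^k·exp( a·T_r - b·∫_0^{T_r} y_pr(t) dt ) < 1 if and only if μ > d·( a/b + ln(1-α_x)/(b·T_h) )·( 1-(1-α_y)·e^{-d T_h} )/( 1-e^{-d T_h} ). -/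
open Real Set Finset intervalIntegral MeasureTheory

lemma rmod_eq_self {P t : ℝ} (h0 : 0 ≤ t) (ht : t < P) : rmod P t = t := by
  have : ⌊t / P⌋ = 0 :=
    Int.floor_eq_zero_iff.2 ⟨div_nonneg h0 (h0.trans ht.le), (div_lt_one (h0.trans_lt ht)).2 ht⟩
  simp [rmod, this]

lemma Int.toNat_floor_div_eq_of_mem_Ico {h t : ℝ} {j : ℕ} (hh : 0 < h)
    (ht : t ∈ Ico (j * h) ((j + 1) * h)) : ⌊t / h⌋.toNat = j := by
  have : ⌊t / h⌋ = j := by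
    rw [Int.floor_eq_iff, le_div_iff₀ hh, div_lt_iff₀ hh]
    exact_mod_cast ht
  simp [this]

theorem intervalIntegral.integral_eq_sum_of_eqOn_uIoo {E : Type*} [NormedAddCommGroup E]
    [NormedSpace ℝ E] {f : ℝ → E} {g : ℕ → ℝ → E} {a : ℕ → ℝ} {n : ℕ}
    (hg : ∀ j < n, IntervalIntegrable (g j) volume (a j) (a (j + 1)))
    (hfg : ∀ j < n, EqOn f (g j) (uIoo (a j) (a (j + 1)))) :
    ∫ t in a 0..a n, f t = ∑ j ∈ range n, ∫ t in a j..a (j + 1), g j t := by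
  rw [← sum_integral_adjacent_intervals fun j hj =>
    (intervalIntegrable_congr_uIoo (hfg j hj)).2 (hg j hj)]
  exact sum_congr rfl fun j hj => integral_congr_uIoo (hfg j (mem_range.1 hj))

lemma integral_exp_neg_mul {d : ℝ} (hd : d ≠ 0) (x y : ℝ) :
    ∫ t in x..y, exp (-d * t) = (exp (-d * x) - exp (-d * y)) / d := by
  rw [integral_comp_mul_left (fun t => exp t) (neg_ne_zero.2 hd), integral_exp, smul_eq_mul]
  field_simp
  ring

lemma integral_pestFree {d Th : ℝ} (hd : d ≠ 0) (hTh : 0 < Th) (ystar q : ℝ) (k : ℕ) :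
    ∫ t in (0 : ℝ)..k * Th, ystar * exp (-d * rmod (k * Th) t) * q ^ ⌊rmod (k * Th) t / Th⌋.toNat
      = ystar * (1 - exp (-d * Th)) / d * ∑ j ∈ range k, (q * exp (-d * Th)) ^ j := by
  have hpiece : ∀ j < k, EqOn
      (fun t => ystar * exp (-d * rmod (k * Th) t) * q ^ ⌊rmod (k * Th) t / Th⌋.toNat)
      (fun t => ystar * q ^ j * exp (-d * t)) (uIoo ((j : ℕ) * Th) ((j + 1 : ℕ) * Th)) := by
    intro j hj t ht
    rw [uIoo_of_le (by gcongr; omega)] at ht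
    have hjk : ((j + 1 : ℕ) : ℝ) * Th ≤ k * Th := by gcongr; exact_mod_cast hj
    push_cast at ht hjk
    have hrmod : rmod (k * Th) t = t :=
      rmod_eq_self ((by positivity : (0 : ℝ) ≤ j * Th).trans ht.1.le) (ht.2.trans_le hjk)
    simp only [hrmod, Int.toNat_floor_div_eq_of_mem_Ico hTh (Ioo_subset_Ico_self ht)]
    ring
  have hsplit := integral_eq_sum_of_eqOn_uIoo (a := fun j : ℕ => (j : ℝ) * Th)
    (fun j _ => (by fun_prop : Continuous _).intervalIntegrable _ _) hpiece
  simp only [CharP.cast_eq_zero, zero_mul] at hsplit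
  rw [hsplit, mul_sum]
  refine sum_congr rfl fun j _ => ?_
  rw [intervalIntegral.integral_const_mul, integral_exp_neg_mul hd]
  push_cast
  rw [show -d * ((j + 1) * Th) = -d * Th + j * (-d * Th) by ring,
    show -d * (j * Th) = j * (-d * Th) by ring, exp_add, exp_nat_mul]
  ring

lemma pow_mul_exp_lt_one_iff {x : ℝ} (hx : 0 < x) (k : ℕ) (y : ℝ) :
    x ^ k * exp y < 1 ↔ k * log x + y < 0 := by
  rw [← exp_log (pow_pos hx k), ← exp_add, exp_lt_one_iff, log_pow]

lemma stability_exponent_neg_iff {k : ℕ} {Th a b d μ L E qE : ℝ} (hk : 0 < k) (hTh : 0 < Th)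
    (hb : 0 < b) (hd : 0 < d) (hE : E < 1) (hqE : qE < 1) :
    k * L + (a * (k * Th) - b * (μ * (k * Th) * (1 - E) / (d * (1 - qE)))) < 0 ↔
      μ > d * (a / b + L / (b * Th)) * (1 - qE) / (1 - E) := by
  have hE' : 0 < 1 - E := sub_pos.2 hE
  have hqE' : 0 < 1 - qE := sub_pos.2 hqE
  have h1 : k * L + (a * (k * Th) - b * (μ * (k * Th) * (1 - E) / (d * (1 - qE))))
      = k / (d * (1 - qE)) * (d * (a * Th + L) * (1 - qE) - b * μ * Th * (1 - E)) := by
    field_simp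
    ring
  have h2 : d * (a / b + L / (b * Th)) * (1 - qE) / (1 - E)
      = d * (a * Th + L) * (1 - qE) / (b * Th * (1 - E)) := by
    field_simp
  have hc : 0 < k / (d * (1 - qE)) := by positivity
  rw [h1, h2, gt_iff_lt, div_lt_iff₀ (by positivity), mul_neg_iff]
  constructor
  · rintro (⟨-, h⟩ | ⟨h, -⟩) <;> linarith
  · intro h
    exact Or.inl ⟨hc, by linarith⟩

theorem stmt_13_general (d Th Tr αx αy μ a b : ℝ) (k : ℕ) (hk : 0 < k) (hd : 0 < d) (hTh : 0 < Th)
    (hTr : Tr = (k : ℝ) * Th) (hαx : αx ∈ Set.Ioo (0 : ℝ) 1) (hαy : αy ∈ Set.Icc (0 : ℝ) 1)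
    (hb : 0 < b)
    (ystar : ℝ)
    (hystar : ystar = μ * Tr / (1 - (1 - αy) ^ k * Real.exp (-d * Tr)))
    (ypr : ℝ → ℝ)
    (hypr : ∀ t : ℝ, ypr t = ystar * Real.exp (-d * rmod Tr t)
      * (1 - αy) ^ (⌊rmod Tr t / Th⌋.toNat)) :
    (1 - αx) ^ k * Real.exp (a * Tr - b * ∫ t in (0 : ℝ)..Tr, ypr t) < 1 ↔
      μ > d * (a / b + Real.log (1 - αx) / (b * Th))
        * (1 - (1 - αy) * Real.exp (-d * Th)) / (1 - Real.exp (-d * Th)) := by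
  subst hTr
  set E := exp (-d * Th) with hEdef
  have hE : E < 1 := exp_lt_one_iff.2 (by nlinarith)
  have hqE0 : 0 ≤ (1 - αy) * E := mul_nonneg (sub_nonneg.2 hαy.2) (exp_pos _).le
  have hqE : (1 - αy) * E < 1 := by nlinarith [hαy.1, exp_pos (-d * Th)]
  have hint :
      ∫ t in (0 : ℝ)..k * Th, ypr t = μ * (k * Th) * (1 - E) / (d * (1 - (1 - αy) * E)) := by
    have hexp : exp (-d * (k * Th)) = E ^ k := by rw [← exp_nat_mul]; ring_nf
    have hqEk : ((1 - αy) * E) ^ k < 1 := pow_lt_one₀ hqE0 hqE hk.ne'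
    have hqE' : (1 - αy) * E - 1 ≠ 0 := sub_ne_zero.2 hqE.ne
    have hqE'' : 1 - (1 - αy) * E ≠ 0 := (sub_pos.2 hqE).ne'
    have hqEk' : 1 - ((1 - αy) * E) ^ k ≠ 0 := (sub_pos.2 hqEk).ne'
    simp_rw [hypr]
    rw [integral_pestFree hd.ne' hTh, ← hEdef, geom_sum_eq hqE.ne, hystar, hexp, ← mul_pow]
    field_simp
    ring
  rw [hint, pow_mul_exp_lt_one_iff (sub_pos.2 hαx.2)]
  exact stability_exponent_neg_iff hk hTh hb hd hE hqE

/-- The local stability condition `|B₁₁| < 1` over one release period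
(`T_r = k·T_h`, harvests more frequent than releases) is equivalent to
`μ > μ_r(a/b, b)` where `a = f'(0)` and `b = g'(0)`. -/
theorem stmt_13 (d Th Tr αx αy μ a b : ℝ) (k : ℕ) (hk : 0 < k) (hd : 0 < d) (hTh : 0 < Th)
    (hTr : Tr = (k : ℝ) * Th) (hαx : αx ∈ Set.Ioo (0 : ℝ) 1) (hαy : αy ∈ Set.Icc (0 : ℝ) 1)
    (hμ : 0 ≤ μ) (ha : 0 < a) (hb : 0 < b)
    (ystar : ℝ)
    (hystar : ystar = μ * Tr / (1 - (1 - αy) ^ k * Real.exp (-d * Tr)))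
    (ypr : ℝ → ℝ)
    (hypr : ∀ t : ℝ, ypr t = ystar * Real.exp (-d * rmod Tr t)
      * (1 - αy) ^ (⌊rmod Tr t / Th⌋.toNat)) :
    (1 - αx) ^ k * Real.exp (a * Tr - b * ∫ t in (0 : ℝ)..Tr, ypr t) < 1 ↔
      μ > d * (a / b + Real.log (1 - αx) / (b * Th))
        * (1 - (1 - αy) * Real.exp (-d * Th)) / (1 - Real.exp (-d * Th)) :=
  stmt_13_general d Th Tr αx αy μ a b k hk hd hTh hTr hαx hαy hb ystar hystar ypr hypr
end
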